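/- arXiv:1211.1197 — 2 statements merged into one kernel-verified Lean document; each statement's English description precedes it below -/
import Mathlib

section
/- For any α, β > 0 and any θ₀, θ₁ ∈ ℝ^n, there exists a test φ (a measurable function of X with values in [0,1]) such that for every θ ∈ ℝ^n with ‖θ − θ₁‖ ≤ ‖θ₀ − θ₁‖/2 =: ρ, one has α·E_{θ₀}[φ] + β·E_θ[1−φ] ≤ α·Φ̄(ρ/2 + (1/ρ)log(α/β)) + β·Φ(−ρ/2 + (1/ρ)log(α/β)), where Φ is the standard normal CDF and Φ̄ = 1 − Φ. -/
open MeasureTheory Real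

/-- The density of `N(θ, I_n)` on `ℝ^n`. -/
noncomputable def gaussDensity {n : ℕ} (θ x : EuclideanSpace ℝ (Fin n)) : ℝ :=
  (2 * Real.pi) ^ (-(n : ℝ) / 2) * Real.exp (-‖x - θ‖ ^ 2 / 2)

/-- The Gaussian measure `N(θ, I_n)` on `ℝ^n`. -/
noncomputable def gaussMeasure {n : ℕ} (θ : EuclideanSpace ℝ (Fin n)) :
    Measure (EuclideanSpace ℝ (Fin n)) :=
  volume.withDensity (fun x => ENNReal.ofReal (gaussDensity θ x))

/-- The standard normal distribution function. -/
noncomputable def stdNormalCDF (t : ℝ) : ℝ :=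
  (2 * Real.pi) ^ (-(1 : ℝ) / 2) * ∫ x in Set.Iic t, Real.exp (-x ^ 2 / 2)

/-! Project onto the unit vector `u` pointing from `θ₀` to `θ₁`. Under `N(θ, I_n)` the statistic
`⟪u, X⟫` is `N(⟪u, θ⟫, 1)`; this is seen by identifying `gaussMeasure θ` with the translate of
Mathlib's `stdGaussian` through characteristic functions. Rejecting when `⟪u, X - θ₀⟫ > a` has
type I error `1 - Φ(a)` and, since `⟪u, θ - θ₀⟫ ≥ ρ` on the ball `‖θ - θ₁‖ ≤ ρ`, type II error at
most `Φ(a - ρ)`. When `θ₀ = θ₁` we have `ρ = 0`, both arguments of `Φ` coincide, and the constant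
test `1 - Φ(a)` attains the bound. -/

open ProbabilityTheory

lemma stdNormalCDF_eq_cdf : stdNormalCDF = cdf (gaussianReal 0 1) := by
  ext t
  rw [cdf_eq_real, measureReal_def, gaussianReal_apply_eq_integral _ one_ne_zero,
    ENNReal.toReal_ofReal (setIntegral_nonneg measurableSet_Iic
      fun x _ => gaussianPDFReal_nonneg 0 1 x), gaussianPDFReal_def, integral_const_mul,
    stdNormalCDF, Real.sqrt_eq_rpow, ← Real.rpow_neg_one, ← Real.rpow_mul (by positivity)]
  simp [neg_div]

lemma stdNormalCDF_monotone : Monotone stdNormalCDF :=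
  stdNormalCDF_eq_cdf ▸ (cdf _).mono

lemma stdNormalCDF_mem_Icc (t : ℝ) : stdNormalCDF t ∈ Set.Icc 0 1 := by
  rw [stdNormalCDF_eq_cdf]
  exact ⟨cdf_nonneg _ t, cdf_le_one _ t⟩

lemma gaussianReal_real_Iic (m t : ℝ) :
    (gaussianReal m 1).real (Set.Iic t) = stdNormalCDF (t - m) := by
  rw [← zero_add m, ← gaussianReal_map_add_const, map_measureReal_apply (measurable_add_const m)
    measurableSet_Iic, Set.preimage_add_const_Iic, stdNormalCDF_eq_cdf, cdf_eq_real, zero_add]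

lemma gaussianReal_real_Ioi (m t : ℝ) :
    (gaussianReal m 1).real (Set.Ioi t) = 1 - stdNormalCDF (t - m) := by
  rw [← Set.compl_Iic, probReal_compl_eq_one_sub measurableSet_Iic, gaussianReal_real_Iic]

lemma integral_exp_neg_sq_norm_div_two {V : Type*} [NormedAddCommGroup V]
    [InnerProductSpace ℝ V] [FiniteDimensional ℝ V] [MeasurableSpace V] [BorelSpace V] :
    ∫ y : V, Real.exp (-‖y‖ ^ 2 / 2) = (2 * π) ^ ((Module.finrank ℝ V : ℝ) / 2) := by
  have h := GaussianFourier.integral_rexp_neg_mul_sq_norm (V := V) (b := 1 / 2) (by norm_num)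
  rw [div_div_eq_mul_div, div_one, mul_comm π] at h
  simpa only [neg_div, neg_mul, one_div, inv_mul_eq_div] using h

section GaussMeasure

variable {n : ℕ}

lemma gaussDensity_add (θ y : EuclideanSpace ℝ (Fin n)) :
    gaussDensity θ (y + θ) = (2 * π) ^ (-(n : ℝ) / 2) * Real.exp (-‖y‖ ^ 2 / 2) := by
  rw [gaussDensity, add_sub_cancel_right]

lemma integral_gaussDensity (θ : EuclideanSpace ℝ (Fin n)) : ∫ x, gaussDensity θ x = 1 := by
  rw [← integral_add_right_eq_self _ θ]
  simp_rw [gaussDensity_add]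
  rw [integral_const_mul, integral_exp_neg_sq_norm_div_two, finrank_euclideanSpace_fin,
    ← Real.rpow_add Real.two_pi_pos, neg_div, neg_add_cancel, Real.rpow_zero]

instance isFiniteMeasure_gaussMeasure (θ : EuclideanSpace ℝ (Fin n)) :
    IsFiniteMeasure (gaussMeasure θ) :=
  isFiniteMeasure_withDensity_ofReal
    (Integrable.of_integral_ne_zero (by simp [integral_gaussDensity])).hasFiniteIntegral

lemma integral_gaussMeasure {F : Type*} [NormedAddCommGroup F] [NormedSpace ℝ F]
    (θ : EuclideanSpace ℝ (Fin n)) (g : EuclideanSpace ℝ (Fin n) → F) :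
    ∫ x, g x ∂gaussMeasure θ =
      (2 * π) ^ (-(n : ℝ) / 2) • ∫ y, Real.exp (-‖y‖ ^ 2 / 2) • g (y + θ) := by
  rw [gaussMeasure, integral_withDensity_eq_integral_toReal_smul (by unfold gaussDensity; fun_prop)
    (ae_of_all _ fun _ => ENNReal.ofReal_lt_top),
    ← integral_add_right_eq_self _ θ, ← integral_smul]
  congr with y
  rw [ENNReal.toReal_ofReal (by unfold gaussDensity; positivity), gaussDensity_add, mul_smul]

lemma charFun_gaussMeasure (θ t : EuclideanSpace ℝ (Fin n)) :
    charFun (gaussMeasure θ) t = Complex.exp (inner ℝ θ t * Complex.I - ‖t‖ ^ 2 / 2) := by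
  have hfourier := GaussianFourier.integral_cexp_neg_mul_sq_norm_add
    (V := EuclideanSpace ℝ (Fin n)) (b := 1 / 2) (by norm_num) Complex.I t
  rw [finrank_euclideanSpace_fin] at hfourier
  have hintegrand : ∀ y : EuclideanSpace ℝ (Fin n),
      Real.exp (-‖y‖ ^ 2 / 2) • Complex.exp (inner ℝ (y + θ) t * Complex.I) =
        Complex.exp (inner ℝ θ t * Complex.I) *
          Complex.exp (-(1 / 2) * ‖y‖ ^ 2 + Complex.I * inner ℝ t y) := by
    intro y
    rw [Complex.real_smul, Complex.ofReal_exp, ← Complex.exp_add, ← Complex.exp_add,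
      inner_add_left, real_inner_comm y t]
    push_cast
    ring_nf
  have hpow : ((π : ℂ) / (1 / 2)) ^ ((n : ℂ) / 2) = ((2 * π) ^ ((n : ℝ) / 2) : ℝ) := by
    rw [Complex.ofReal_cpow Real.two_pi_pos.le]
    push_cast
    ring_nf
  have hnormalize :
      (((2 * π) ^ (-(n : ℝ) / 2) : ℝ) : ℂ) * ((2 * π) ^ ((n : ℝ) / 2) : ℝ) = 1 := by
    rw [← Complex.ofReal_mul, ← Real.rpow_add Real.two_pi_pos, neg_div, neg_add_cancel,
      Real.rpow_zero, Complex.ofReal_one]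
  have hexp : Complex.exp (inner ℝ θ t * Complex.I) *
      Complex.exp (Complex.I ^ 2 * ‖t‖ ^ 2 / (4 * (1 / 2))) =
        Complex.exp (inner ℝ θ t * Complex.I - ‖t‖ ^ 2 / 2) := by
    rw [← Complex.exp_add, Complex.I_sq]
    ring_nf
  rw [charFun_apply, integral_gaussMeasure]
  simp_rw [hintegrand]
  rw [integral_const_mul, hfourier, hpow, Complex.real_smul]
  linear_combination (Complex.exp (inner ℝ θ t * Complex.I) *
      Complex.exp (Complex.I ^ 2 * ‖t‖ ^ 2 / (4 * (1 / 2)))) * hnormalize + hexp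

lemma gaussMeasure_eq_map_stdGaussian (θ : EuclideanSpace ℝ (Fin n)) :
    gaussMeasure θ = (stdGaussian _).map (· + θ) := by
  refine Measure.ext_of_charFun (funext fun t => ?_)
  rw [charFun_map_add_const, charFun_stdGaussian, charFun_gaussMeasure, ← Complex.exp_add]
  ring_nf

instance isProbabilityMeasure_gaussMeasure (θ : EuclideanSpace ℝ (Fin n)) :
    IsProbabilityMeasure (gaussMeasure θ) := by
  rw [gaussMeasure_eq_map_stdGaussian]
  exact Measure.isProbabilityMeasure_map (by fun_prop)

lemma map_inner_gaussMeasure (θ u : EuclideanSpace ℝ (Fin n)) :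
    (gaussMeasure θ).map (inner ℝ u) = gaussianReal (inner ℝ u θ) (‖u‖ ^ 2).toNNReal := by
  have hcomp : inner ℝ u ∘ (· + θ) = (· + inner ℝ u θ) ∘ innerSL ℝ u := by
    ext x
    simp [inner_add_right]
  rw [gaussMeasure_eq_map_stdGaussian, Measure.map_map (by fun_prop) (by fun_prop), hcomp,
    ← Measure.map_map (by fun_prop) (by fun_prop), IsGaussian.map_eq_gaussianReal,
    integral_strongDual_stdGaussian, variance_dual_stdGaussian, innerSL_apply_norm,
    gaussianReal_map_add_const, zero_add]

lemma integral_indicator_inner_gaussMeasure (θ u : EuclideanSpace ℝ (Fin n)) {s : Set ℝ}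
    (hs : MeasurableSet s) :
    ∫ x, s.indicator 1 (inner ℝ u x) ∂gaussMeasure θ =
      (gaussianReal (inner ℝ u θ) (‖u‖ ^ 2).toNNReal).real s := by
  rw [← map_inner_gaussMeasure, ← integral_indicator_one hs,
    integral_map (by fun_prop) (by fun_prop)]

end GaussMeasure

section HalfspaceTest

variable {E : Type*} [NormedAddCommGroup E] [InnerProductSpace ℝ E]

lemma le_inner_normalize_sub {θ₀ θ₁ θ : E} (h : ‖θ - θ₁‖ ≤ ‖θ₀ - θ₁‖ / 2) :
    ‖θ₀ - θ₁‖ / 2 ≤ inner ℝ (‖θ₁ - θ₀‖⁻¹ • (θ₁ - θ₀)) (θ - θ₀) := by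
  set u := ‖θ₁ - θ₀‖⁻¹ • (θ₁ - θ₀)
  have hu : ‖u‖ ≤ 1 := by
    rw [norm_smul, norm_inv, norm_norm]
    exact inv_mul_le_one_of_le₀ le_rfl (norm_nonneg _)
  have hu_dir : inner ℝ u (θ₁ - θ₀) = ‖θ₁ - θ₀‖ := by
    rw [real_inner_smul_left, real_inner_self_eq_norm_sq]
    rcases eq_or_ne ‖θ₁ - θ₀‖ 0 with h0 | h0
    · simp [h0]
    · field_simp
  have hcs : -‖θ - θ₁‖ ≤ inner ℝ u (θ - θ₁) :=
    calc -‖θ - θ₁‖ ≤ -(‖u‖ * ‖θ - θ₁‖) := by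
          gcongr
          exact mul_le_of_le_one_left (norm_nonneg _) hu
      _ ≤ inner ℝ u (θ - θ₁) := neg_le_of_abs_le (abs_real_inner_le_norm _ _)
  rw [show θ - θ₀ = (θ₁ - θ₀) + (θ - θ₁) by abel, inner_add_right, hu_dir, norm_sub_rev θ₁]
  linarith

noncomputable def halfspaceTest (u : E) (c : ℝ) (x : E) : ℝ :=
  (Set.Ioi c).indicator 1 (inner ℝ u x)

lemma measurable_halfspaceTest [MeasurableSpace E] [OpensMeasurableSpace E] (u : E) (c : ℝ) :
    Measurable (halfspaceTest u c) :=
  (measurable_const.indicator measurableSet_Ioi).comp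
    (continuous_const.inner continuous_id).measurable

lemma halfspaceTest_mem_Icc (u : E) (c : ℝ) (x : E) : halfspaceTest u c x ∈ Set.Icc 0 1 := by
  unfold halfspaceTest
  by_cases h : inner ℝ u x ∈ Set.Ioi c <;> simp [h]

lemma one_sub_halfspaceTest (u : E) (c : ℝ) (x : E) :
    1 - halfspaceTest u c x = (Set.Iic c).indicator 1 (inner ℝ u x) := by
  rw [halfspaceTest, ← Set.compl_Ioi, Set.indicator_compl]
  rfl

end HalfspaceTest

section HalfspaceTestGaussMeasure

variable {n : ℕ} {θ u : EuclideanSpace ℝ (Fin n)}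

lemma integral_halfspaceTest_gaussMeasure (hu : ‖u‖ = 1) (c : ℝ) :
    ∫ x, halfspaceTest u c x ∂gaussMeasure θ = 1 - stdNormalCDF (c - inner ℝ u θ) := by
  simp only [halfspaceTest]
  rw [integral_indicator_inner_gaussMeasure θ u measurableSet_Ioi, hu, one_pow,
    Real.toNNReal_one, gaussianReal_real_Ioi]

lemma integral_one_sub_halfspaceTest_gaussMeasure (hu : ‖u‖ = 1) (c : ℝ) :
    ∫ x, (1 - halfspaceTest u c x) ∂gaussMeasure θ = stdNormalCDF (c - inner ℝ u θ) := by
  simp only [one_sub_halfspaceTest]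
  rw [integral_indicator_inner_gaussMeasure θ u measurableSet_Iic, hu, one_pow,
    Real.toNNReal_one, gaussianReal_real_Iic]

end HalfspaceTestGaussMeasure

theorem existence_of_tests_general {n : ℕ} (α β : ℝ) (hβ : 0 < β)
    (θ₀ θ₁ : EuclideanSpace ℝ (Fin n)) :
    ∃ φ : EuclideanSpace ℝ (Fin n) → ℝ, Measurable φ ∧ (∀ x, φ x ∈ Set.Icc (0:ℝ) 1) ∧
      ∀ θ : EuclideanSpace ℝ (Fin n), ‖θ - θ₁‖ ≤ ‖θ₀ - θ₁‖ / 2 →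
        α * ∫ x, φ x ∂(gaussMeasure θ₀) + β * ∫ x, (1 - φ x) ∂(gaussMeasure θ) ≤
          α * (1 - stdNormalCDF (‖θ₀ - θ₁‖ / 2 / 2
                + (1 / (‖θ₀ - θ₁‖ / 2)) * Real.log (α / β)))
            + β * stdNormalCDF (-(‖θ₀ - θ₁‖ / 2) / 2
                + (1 / (‖θ₀ - θ₁‖ / 2)) * Real.log (α / β)) := by
  set ρ := ‖θ₀ - θ₁‖ / 2
  set a := ρ / 2 + 1 / ρ * Real.log (α / β) with ha
  rcases eq_or_ne θ₀ θ₁ with rfl | hne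
  · have hρ : ρ = 0 := by simp [ρ]
    refine ⟨fun _ => 1 - stdNormalCDF a, measurable_const, fun _ => ?_, fun θ _ => ?_⟩
    · obtain ⟨h0, h1⟩ := stdNormalCDF_mem_Icc a
      constructor <;> linarith
    · simp [a, hρ]
  · set u := ‖θ₁ - θ₀‖⁻¹ • (θ₁ - θ₀)
    have hu : ‖u‖ = 1 := norm_smul_inv_norm (sub_ne_zero.2 hne.symm)
    -- the likelihood ratio test of `θ₀` against `θ₀ + ρ • u`, the point of the ball nearest `θ₀`
    refine ⟨halfspaceTest u (inner ℝ u θ₀ + a), measurable_halfspaceTest _ _,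
      halfspaceTest_mem_Icc _ _, fun θ hθ => ?_⟩
    have hshift : ρ ≤ inner ℝ u θ - inner ℝ u θ₀ := by
      rw [← inner_sub_right]
      exact le_inner_normalize_sub hθ
    rw [integral_halfspaceTest_gaussMeasure hu, integral_one_sub_halfspaceTest_gaussMeasure hu,
      add_sub_cancel_left]
    gcongr
    exact stdNormalCDF_monotone (by linarith [ha])

theorem existence_of_tests {n : ℕ} (α β : ℝ) (hα : 0 < α) (hβ : 0 < β)
    (θ₀ θ₁ : EuclideanSpace ℝ (Fin n)) :
    ∃ φ : EuclideanSpace ℝ (Fin n) → ℝ, Measurable φ ∧ (∀ x, φ x ∈ Set.Icc (0:ℝ) 1) ∧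
      ∀ θ : EuclideanSpace ℝ (Fin n), ‖θ - θ₁‖ ≤ ‖θ₀ - θ₁‖ / 2 →
        α * ∫ x, φ x ∂(gaussMeasure θ₀) + β * ∫ x, (1 - φ x) ∂(gaussMeasure θ) ≤
          α * (1 - stdNormalCDF (‖θ₀ - θ₁‖ / 2 / 2
                + (1 / (‖θ₀ - θ₁‖ / 2)) * Real.log (α / β)))
            + β * stdNormalCDF (-(‖θ₀ - θ₁‖ / 2) / 2
                + (1 / (‖θ₀ - θ₁‖ / 2)) * Real.log (α / β)) :=
  existence_of_tests_general α β hβ θ₀ θ₁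
end

section
/- Let Π_n be a prior on ℝ^n, θ₀ ∈ ℝ^n, and X ~ N(θ₀, I_n), with posterior Π_n(·|X) given by Bayes's rule with Gaussian likelihood. If there exist radii s_n < r_n with Π_n({θ : ‖θ−θ₀‖ < s_n}) / Π_n({θ : ‖θ−θ₀‖ < r_n}) = o(exp(−r_n²)), then E_{θ₀}[Π_n({θ : ‖θ−θ₀‖ < s_n} | X)] → 0 as n → ∞. -/
open MeasureTheory Real Filter ENNReal

/-- The posterior mass of a set `B` given the observation `x`, for the prior `Pi0`
and Gaussian likelihood with mean `θ` and identity covariance. -/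
noncomputable def posterior {n : ℕ} (Pi0 : Measure (EuclideanSpace ℝ (Fin n)))
    (B : Set (EuclideanSpace ℝ (Fin n))) (θ₀ x : EuclideanSpace ℝ (Fin n)) : ℝ≥0∞ :=
  (∫⁻ θ in B, ENNReal.ofReal (gaussDensity θ x / gaussDensity θ₀ x) ∂Pi0) /
    (∫⁻ θ, ENNReal.ofReal (gaussDensity θ x / gaussDensity θ₀ x) ∂Pi0)

/-!
Write `L_θ(x) = p_θ(x) / p_θ₀(x)`, `B`, `C` for the balls of radii `s < r` around `θ₀` and
`b = Π(C)`. Instead of a high-probability lower bound on the evidence `∫ L_θ(x) dΠ(θ)`, use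
Cauchy–Schwarz, `b² ≤ ∫_C L_θ(x) dΠ · ∫_C L_θ(x)⁻¹ dΠ`: for every `x`, either
`∫_C L_θ(x) dΠ ≥ δ b` and the posterior mass of `B` is at most `∫_B L_θ(x) dΠ / (δ b)`, or
`δ ∫_C L_θ(x)⁻¹ dΠ / b ≥ 1`. Taking `E_θ₀` with Fubini, `E_θ₀ L_θ = 1` and the χ²-moment
`E_θ₀ L_θ⁻¹ = exp ‖θ - θ₀‖²` gives `E_θ₀ Π(B | X) ≤ δ e^{r²} + Π(B) / (δ b)`, and the best `δ`
turns this into `2 √(Π(B) / Π(C) · e^{r²})`, which tends to `0` by hypothesis.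
-/

theorem sq_measure_univ_le_lintegral_mul_lintegral_inv {α : Type*} [MeasurableSpace α]
    (μ : Measure α) {f : α → ℝ≥0∞} (hf : AEMeasurable f μ) (hf0 : ∀ a, f a ≠ 0)
    (hftop : ∀ a, f a ≠ ∞) :
    μ Set.univ ^ 2 ≤ (∫⁻ a, f a ∂μ) * ∫⁻ a, (f a)⁻¹ ∂μ := by
  have holder := ENNReal.lintegral_mul_norm_pow_le hf hf.inv (p := 2⁻¹) (q := 2⁻¹)
    (by norm_num) (by norm_num) (by norm_num)
  have hone : ∀ a, f a ^ (2⁻¹ : ℝ) * (f a)⁻¹ ^ (2⁻¹ : ℝ) = 1 := fun a => by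
    rw [← ENNReal.mul_rpow_of_nonneg _ _ (by norm_num), ENNReal.mul_inv_cancel (hf0 a) (hftop a),
      ENNReal.one_rpow]
  rw [← ENNReal.mul_rpow_of_nonneg _ _ (by norm_num)] at holder
  simp only [Pi.inv_apply, hone, lintegral_one] at holder
  rw [← ENNReal.rpow_two]
  exact (ENNReal.le_rpow_inv_iff (by norm_num)).mp holder

theorem div_le_of_sq_le_mul {N D Dc I b : ℝ≥0∞} (δ : ℝ≥0∞) (hN : N ≤ D) (hDc : Dc ≤ D)
    (hb : b ^ 2 ≤ Dc * I) (hb0 : b ≠ 0) (hbtop : b ≠ ∞) :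
    N / D ≤ δ / b * I + (δ * b)⁻¹ * N := by
  rcases le_or_gt (δ * b) Dc with hlarge | hsmall
  · calc N / D ≤ N / (δ * b) := ENNReal.div_le_div_left (hlarge.trans hDc) N
      _ ≤ _ := by rw [div_eq_mul_inv, mul_comm]; exact le_add_self
  · -- b² ≤ Dc I < δ b I, so the first term is at least 1
    have hbI : b ≤ δ * I := by
      rw [← ENNReal.mul_le_mul_iff_left hb0 hbtop, ← pow_two]
      calc b ^ 2 ≤ Dc * I := hb
        _ ≤ δ * b * I := mul_le_mul_left hsmall.le I
        _ = δ * I * b := by ring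
    calc N / D ≤ 1 := ENNReal.div_le_of_le_mul (by simpa using hN)
      _ ≤ δ / b * I := by
        rw [div_eq_mul_inv, mul_right_comm, ← div_eq_mul_inv,
          ENNReal.le_div_iff_mul_le (Or.inl hb0) (Or.inl hbtop), one_mul]
        exact hbI
      _ ≤ _ := le_self_add

theorem lintegral_setLIntegral_div_lintegral_le {Θ 𝒳 : Type*} [MeasurableSpace Θ]
    [MeasurableSpace 𝒳]
    (ν : Measure Θ) [SFinite ν] (P : Measure 𝒳) [SFinite P] {L : Θ → 𝒳 → ℝ≥0∞}
    (hL : Measurable (Function.uncurry L)) (hL0 : ∀ θ x, L θ x ≠ 0) (hLtop : ∀ θ x, L θ x ≠ ∞)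
    (hmean : ∀ θ, ∫⁻ x, L θ x ∂P ≤ 1) {B C : Set Θ}
    (hC0 : ν C ≠ 0) (hCtop : ν C ≠ ∞) {M : ℝ≥0∞} (hM : ∀ θ ∈ C, ∫⁻ x, (L θ x)⁻¹ ∂P ≤ M)
    (δ : ℝ≥0∞) :
    ∫⁻ x, (∫⁻ θ in B, L θ x ∂ν) / (∫⁻ θ, L θ x ∂ν) ∂P ≤ δ * M + ν B / (δ * ν C) := by
  have hLswap : Measurable fun p : 𝒳 × Θ => L p.2 p.1 := hL.comp measurable_swap
  have cauchySchwarz (x : 𝒳) : ν C ^ 2 ≤ (∫⁻ θ in C, L θ x ∂ν) * ∫⁻ θ in C, (L θ x)⁻¹ ∂ν := by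
    simpa using sq_measure_univ_le_lintegral_mul_lintegral_inv (ν.restrict C)
      hL.of_uncurry_right.aemeasurable (hL0 · x) (hLtop · x)
  have hIC : Measurable fun x => ∫⁻ θ in C, (L θ x)⁻¹ ∂ν := hL.inv.lintegral_prod_left'
  have hNB : Measurable fun x => ∫⁻ θ in B, L θ x ∂ν := hL.lintegral_prod_left'
  have hinv : ∫⁻ x, ∫⁻ θ in C, (L θ x)⁻¹ ∂ν ∂P ≤ M * ν C := by
    rw [lintegral_lintegral_swap hLswap.inv.aemeasurable, ← setLIntegral_const]
    exact setLIntegral_mono measurable_const hM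
  have hratio : ∫⁻ x, ∫⁻ θ in B, L θ x ∂ν ∂P ≤ ν B := by
    rw [lintegral_lintegral_swap hLswap.aemeasurable, ← setLIntegral_one]
    exact lintegral_mono hmean
  calc ∫⁻ x, (∫⁻ θ in B, L θ x ∂ν) / (∫⁻ θ, L θ x ∂ν) ∂P
      ≤ ∫⁻ x, δ / ν C * (∫⁻ θ in C, (L θ x)⁻¹ ∂ν) + (δ * ν C)⁻¹ * ∫⁻ θ in B, L θ x ∂ν ∂P :=
        lintegral_mono fun x => div_le_of_sq_le_mul δ (setLIntegral_le_lintegral _ _)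
          (setLIntegral_le_lintegral _ _) (cauchySchwarz x) hC0 hCtop
    _ = δ / ν C * (∫⁻ x, ∫⁻ θ in C, (L θ x)⁻¹ ∂ν ∂P)
          + (δ * ν C)⁻¹ * ∫⁻ x, ∫⁻ θ in B, L θ x ∂ν ∂P := by
        rw [lintegral_add_left (hIC.const_mul _), lintegral_const_mul _ hIC,
          lintegral_const_mul _ hNB]
    _ ≤ δ / ν C * (M * ν C) + (δ * ν C)⁻¹ * ν B := by gcongr
    _ = δ * M + ν B / (δ * ν C) := by
        rw [mul_comm M, ← mul_assoc, ENNReal.div_mul_cancel hC0 hCtop, ENNReal.div_eq_inv_mul]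

theorem exists_mul_ofReal_add_ofReal_div_eq {a b M : ℝ} (ha : 0 < a) (hb : 0 < b) (hM : 0 < M) :
    ∃ δ : ℝ≥0∞, δ * ENNReal.ofReal M + ENNReal.ofReal a / (δ * ENNReal.ofReal b)
      = ENNReal.ofReal (2 * √(a / b * M)) := by
  set t := a / b * M with ht_def
  have ht : 0 < √t := sqrt_pos.mpr (by positivity)
  refine ⟨ENNReal.ofReal (√t / M), ?_⟩
  have hsecond : a / (√t / M * b) = √t := by
    rw [div_eq_iff (by positivity)]
    field_simp
    rw [sq_sqrt (by positivity), ht_def]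
    field_simp
  rw [← ENNReal.ofReal_mul (by positivity), ← ENNReal.ofReal_mul (by positivity),
    ← ENNReal.ofReal_div_of_pos (by positivity), hsecond, div_mul_cancel₀ _ hM.ne',
    ← ENNReal.ofReal_add ht.le ht.le, two_mul]

section Gaussian

variable {n : ℕ}

local notation "E" => EuclideanSpace ℝ (Fin n)

theorem gaussDensity_pos (θ x : E) : 0 < gaussDensity θ x := by
  unfold gaussDensity
  positivity

theorem integral_gaussDensity_zero : ∫ x, gaussDensity (0 : E) x = 1 := by
  have hexp : ∫ x : E, rexp (-2⁻¹ * ‖x‖ ^ 2) = (2 * π) ^ ((n : ℝ) / 2) := by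
    rw [GaussianFourier.integral_rexp_neg_mul_sq_norm (by norm_num), finrank_euclideanSpace_fin]
    congr 1
    ring
  simp_rw [gaussDensity, sub_zero, integral_const_mul, neg_div, div_eq_inv_mul (‖_‖ ^ 2),
    ← neg_mul]
  rw [hexp, ← Real.rpow_add (by positivity), neg_add_cancel, Real.rpow_zero]

theorem lintegral_gaussDensity (θ : E) : ∫⁻ x, ENNReal.ofReal (gaussDensity θ x) = 1 := by
  have htranslate (x : E) : gaussDensity θ x = gaussDensity 0 (x - θ) := by
    simp [gaussDensity]
  simp_rw [htranslate]
  rw [lintegral_sub_right_eq_self (fun x => ENNReal.ofReal (gaussDensity 0 x)),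
    ← ofReal_integral_eq_lintegral_ofReal
      (.of_integral_ne_zero (by simp [integral_gaussDensity_zero]))
      (.of_forall fun x => (gaussDensity_pos 0 x).le), integral_gaussDensity_zero, ofReal_one]

theorem measurable_gaussDensity (θ : E) : Measurable (gaussDensity θ) := by
  unfold gaussDensity
  fun_prop

theorem gaussDensity_mul_self (θ₀ θ x : E) :
    gaussDensity θ₀ x * gaussDensity θ₀ x
      = rexp (‖θ - θ₀‖ ^ 2) * gaussDensity θ x * gaussDensity (θ₀ - (θ - θ₀)) x := by
  have hexponent (u v : E) :
      -‖u‖ ^ 2 / 2 + -‖u‖ ^ 2 / 2 = ‖v‖ ^ 2 + -‖u - v‖ ^ 2 / 2 + -‖u + v‖ ^ 2 / 2 := by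
    rw [norm_sub_sq_real, norm_add_sq_real]
    ring
  have hexp : rexp (-‖x - θ₀‖ ^ 2 / 2) * rexp (-‖x - θ₀‖ ^ 2 / 2)
      = rexp (‖θ - θ₀‖ ^ 2) * rexp (-‖x - θ‖ ^ 2 / 2)
        * rexp (-‖x - (θ₀ - (θ - θ₀))‖ ^ 2 / 2) := by
    rw [← Real.exp_add, ← Real.exp_add, ← Real.exp_add, show x - θ = (x - θ₀) - (θ - θ₀) by abel,
      show x - (θ₀ - (θ - θ₀)) = (x - θ₀) + (θ - θ₀) by abel, hexponent]
  unfold gaussDensity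
  linear_combination ((2 * π) ^ (-(n : ℝ) / 2)) ^ 2 * hexp

theorem lintegral_gaussMeasure {θ : E} {f : E → ℝ≥0∞} (hf : Measurable f) :
    ∫⁻ x, f x ∂gaussMeasure θ = ∫⁻ x, ENNReal.ofReal (gaussDensity θ x) * f x :=
  lintegral_withDensity_eq_lintegral_mul _ (measurable_gaussDensity θ).ennreal_ofReal hf

instance (θ : E) : IsProbabilityMeasure (gaussMeasure θ) :=
  ⟨by rw [gaussMeasure, withDensity_apply _ .univ, Measure.restrict_univ, lintegral_gaussDensity]⟩

noncomputable def likelihoodRatio (θ₀ θ x : E) : ℝ≥0∞ :=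
  ENNReal.ofReal (gaussDensity θ x / gaussDensity θ₀ x)

theorem likelihoodRatio_ne_zero (θ₀ θ x : E) : likelihoodRatio θ₀ θ x ≠ 0 :=
  (ENNReal.ofReal_pos.mpr (div_pos (gaussDensity_pos θ x) (gaussDensity_pos θ₀ x))).ne'

theorem likelihoodRatio_ne_top (θ₀ θ x : E) : likelihoodRatio θ₀ θ x ≠ ∞ :=
  ENNReal.ofReal_ne_top

theorem measurable_likelihoodRatio (θ₀ : E) :
    Measurable (Function.uncurry (likelihoodRatio θ₀)) := by
  unfold likelihoodRatio gaussDensity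
  fun_prop

theorem lintegral_likelihoodRatio (θ₀ θ : E) :
    ∫⁻ x, likelihoodRatio θ₀ θ x ∂gaussMeasure θ₀ = 1 := by
  rw [lintegral_gaussMeasure (measurable_likelihoodRatio θ₀).of_uncurry_left]
  simp_rw [likelihoodRatio, ← ENNReal.ofReal_mul (gaussDensity_pos θ₀ _).le,
    mul_div_cancel₀ _ (gaussDensity_pos θ₀ _).ne']
  exact lintegral_gaussDensity θ

theorem lintegral_inv_likelihoodRatio (θ₀ θ : E) :
    ∫⁻ x, (likelihoodRatio θ₀ θ x)⁻¹ ∂gaussMeasure θ₀ = ENNReal.ofReal (rexp (‖θ - θ₀‖ ^ 2)) := by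
  have hpointwise (x : E) : ENNReal.ofReal (gaussDensity θ₀ x) * (likelihoodRatio θ₀ θ x)⁻¹
      = ENNReal.ofReal (rexp (‖θ - θ₀‖ ^ 2)) * ENNReal.ofReal (gaussDensity (θ₀ - (θ - θ₀)) x) := by
    rw [likelihoodRatio, ← ENNReal.ofReal_inv_of_pos (div_pos (gaussDensity_pos _ _)
      (gaussDensity_pos _ _)), ← ENNReal.ofReal_mul (gaussDensity_pos _ _).le,
      ← ENNReal.ofReal_mul (Real.exp_pos _).le, inv_div, mul_div_assoc']
    congr 1
    rw [div_eq_iff (gaussDensity_pos _ _).ne', gaussDensity_mul_self]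
    ring
  rw [lintegral_gaussMeasure (f := fun x => (likelihoodRatio θ₀ θ x)⁻¹)
    (measurable_likelihoodRatio θ₀).of_uncurry_left.inv]
  simp_rw [hpointwise]
  rw [lintegral_const_mul' _ _ ENNReal.ofReal_ne_top, lintegral_gaussDensity, mul_one]

theorem posterior_of_measure_eq_zero {Pi0 : Measure E} {B : Set E} (hB : Pi0 B = 0)
    (θ₀ x : E) : posterior Pi0 B θ₀ x = 0 := by
  rw [posterior, Measure.restrict_eq_zero.mpr hB, lintegral_zero_measure, ENNReal.zero_div]

theorem lintegral_posterior_le (Pi0 : Measure E) [IsFiniteMeasure Pi0] (θ₀ : E) {B C : Set E}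
    (hC0 : Pi0 C ≠ 0) {R : ℝ} (hR : ∀ θ ∈ C, ‖θ - θ₀‖ ^ 2 ≤ R) (δ : ℝ≥0∞) :
    ∫⁻ x, posterior Pi0 B θ₀ x ∂gaussMeasure θ₀
      ≤ δ * ENNReal.ofReal (rexp R) + Pi0 B / (δ * Pi0 C) :=
  lintegral_setLIntegral_div_lintegral_le Pi0 (gaussMeasure θ₀) (measurable_likelihoodRatio θ₀)
    (likelihoodRatio_ne_zero θ₀) (likelihoodRatio_ne_top θ₀)
    (fun θ => (lintegral_likelihoodRatio θ₀ θ).le) hC0 (measure_ne_top _ _)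
    (fun θ hθ => (lintegral_inv_likelihoodRatio θ₀ θ).trans_le
      (ENNReal.ofReal_le_ofReal (exp_le_exp.mpr (hR θ hθ)))) δ

theorem lintegral_posterior_ball_le (Pi0 : Measure E) [IsFiniteMeasure Pi0] (θ₀ : E) {s r : ℝ}
    (hsr : s ≤ r) :
    ∫⁻ x, posterior Pi0 {θ | ‖θ - θ₀‖ < s} θ₀ x ∂gaussMeasure θ₀
      ≤ ENNReal.ofReal (2 * √((Pi0 {θ | ‖θ - θ₀‖ < s}).toReal
          / (Pi0 {θ | ‖θ - θ₀‖ < r}).toReal * rexp (r ^ 2))) := by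
  set B := {θ | ‖θ - θ₀‖ < s}
  set C := {θ | ‖θ - θ₀‖ < r}
  by_cases hB : Pi0 B = 0
  · simp [posterior_of_measure_eq_zero hB]
  have hC0 : Pi0 C ≠ 0 :=
    fun hC => hB (measure_mono_null (fun θ (hθ : _ < s) => hθ.trans_le hsr) hC)
  obtain ⟨δ, hδ⟩ := exists_mul_ofReal_add_ofReal_div_eq
    (ENNReal.toReal_pos hB (measure_ne_top _ _)) (ENNReal.toReal_pos hC0 (measure_ne_top _ _))
    (exp_pos (r ^ 2))
  rw [ENNReal.ofReal_toReal (measure_ne_top _ _), ENNReal.ofReal_toReal (measure_ne_top _ _)] at hδ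
  exact hδ ▸ lintegral_posterior_le Pi0 θ₀ hC0
    (fun θ (hθ : _ < r) => pow_le_pow_left₀ (norm_nonneg _) hθ.le 2) δ

end Gaussian

theorem posterior_no_mass_on_small_balls_general
    (Pi0 : (n : ℕ) → Measure (EuclideanSpace ℝ (Fin n)))
    (hPi0 : ∀ n, IsProbabilityMeasure (Pi0 n))
    (θ₀ : (n : ℕ) → EuclideanSpace ℝ (Fin n))
    (s r : ℕ → ℝ) (hsr : ∀ n, s n < r n)
    (hlittleo :
      (fun n => ((Pi0 n) {θ | ‖θ - θ₀ n‖ < s n}).toReal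
          / ((Pi0 n) {θ | ‖θ - θ₀ n‖ < r n}).toReal)
        =o[Filter.atTop] fun n => Real.exp (-(r n) ^ 2)) :
    Filter.Tendsto
      (fun n => ∫⁻ x, posterior (Pi0 n) {θ | ‖θ - θ₀ n‖ < s n} (θ₀ n) x
          ∂(gaussMeasure (θ₀ n)))
      Filter.atTop (nhds 0) := by
  have hbound (n : ℕ) := by
    have := hPi0 n
    exact lintegral_posterior_ball_le (Pi0 n) (θ₀ n) (hsr n).le
  have hratio := hlittleo.tendsto_div_nhds_zero
  simp only [exp_neg, div_inv_eq_mul] at hratio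
  have hsqrt := ENNReal.tendsto_ofReal (hratio.sqrt.const_mul 2)
  rw [sqrt_zero, mul_zero, ENNReal.ofReal_zero] at hsqrt
  exact tendsto_of_tendsto_of_tendsto_of_le_of_le tendsto_const_nhds hsqrt (fun _ => zero_le)
    hbound

theorem posterior_no_mass_on_small_balls
    (Pi0 : (n : ℕ) → Measure (EuclideanSpace ℝ (Fin n)))
    (hPi0 : ∀ n, IsProbabilityMeasure (Pi0 n))
    (θ₀ : (n : ℕ) → EuclideanSpace ℝ (Fin n))
    (s r : ℕ → ℝ) (hsr : ∀ n, s n < r n) (hr : ∀ n, 0 < r n)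
    (hlittleo :
      (fun n => ((Pi0 n) {θ | ‖θ - θ₀ n‖ < s n}).toReal
          / ((Pi0 n) {θ | ‖θ - θ₀ n‖ < r n}).toReal)
        =o[Filter.atTop] fun n => Real.exp (-(r n) ^ 2)) :
    Filter.Tendsto
      (fun n => ∫⁻ x, posterior (Pi0 n) {θ | ‖θ - θ₀ n‖ < s n} (θ₀ n) x
          ∂(gaussMeasure (θ₀ n)))
      Filter.atTop (nhds 0) :=
  posterior_no_mass_on_small_balls_general Pi0 hPi0 θ₀ s r hsr hlittleo
end
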